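/- arXiv:1403.7823 — 4 statements merged into one kernel-verified Lean document; each statement's English description precedes it below -/
import Mathlib

section
/- Let a ≥ 1 and b ≥ 1 be real numbers satisfying 2a² + a²/(2a−1)² − 2a³/(2a−1) = 1/2 + b² − b/2 and ((8a² − 2a + 1)/(2a−1))² − 2 = 16(b² − b/2) − 1. Then 8a³ − 4a + 1 = 0, which is impossible for a ≥ 1. Hence no such pair (a, b) exists. -/
/-!
Both equations prescribe the value of `b ^ 2 - b / 2`. Eliminating `b` and clearing the
denominator `(2a - 1)²` leaves `8a³ - 4a + 1 = 0`, and `8a³ - 4a + 1 = (2a - 1)(4a² + 2a - 1)`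
is positive for `a > 1/2`.
-/

lemma eight_mul_cube_sub_four_mul_add_one_eq_zero {a b : ℝ} (hc : 2 * a - 1 ≠ 0)
    (h1 : 2 * a ^ 2 + a ^ 2 / (2 * a - 1) ^ 2 - 2 * a ^ 3 / (2 * a - 1)
        = 1 / 2 + b ^ 2 - b / 2)
    (h2 : ((8 * a ^ 2 - 2 * a + 1) / (2 * a - 1)) ^ 2 - 2
        = 16 * (b ^ 2 - b / 2) - 1) :
    8 * a ^ 3 - 4 * a + 1 = 0 := by
  have hb_eliminated : ((8 * a ^ 2 - 2 * a + 1) / (2 * a - 1)) ^ 2 - 1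
      = 16 * (2 * a ^ 2 + a ^ 2 / (2 * a - 1) ^ 2 - 2 * a ^ 3 / (2 * a - 1)) - 8 := by
    linarith
  have hdifference : ((8 * a ^ 2 - 2 * a + 1) / (2 * a - 1)) ^ 2 - 1
      - (16 * (2 * a ^ 2 + a ^ 2 / (2 * a - 1) ^ 2 - 2 * a ^ 3 / (2 * a - 1)) - 8)
      = 8 * (8 * a ^ 3 - 4 * a + 1) / (2 * a - 1) ^ 2 := by
    -- keep the denominator atomic, otherwise `field_simp` normalises it and no longer sees `hc`
    set c := 2 * a - 1 with hc_def
    field_simp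
    rw [hc_def]
    ring
  rw [hb_eliminated, sub_self, eq_comm, div_eq_zero_iff] at hdifference
  rcases hdifference with hnum | hden
  · linarith
  · exact absurd (pow_eq_zero_iff two_ne_zero |>.mp hden) hc

lemma eight_mul_cube_sub_four_mul_add_one_pos {a : ℝ} (ha : 1 / 2 < a) :
    0 < 8 * a ^ 3 - 4 * a + 1 := by
  have hfactor : 8 * a ^ 3 - 4 * a + 1 = (2 * a - 1) * (4 * a ^ 2 + 2 * a - 1) := by ring
  rw [hfactor]
  exact mul_pos (by linarith) (by nlinarith)

theorem multipliers_distinct_general (a b : ℝ) (ha : 1 ≤ a)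
    (h1 : 2 * a ^ 2 + a ^ 2 / (2 * a - 1) ^ 2 - 2 * a ^ 3 / (2 * a - 1)
        = 1 / 2 + b ^ 2 - b / 2)
    (h2 : ((8 * a ^ 2 - 2 * a + 1) / (2 * a - 1)) ^ 2 - 2
        = 16 * (b ^ 2 - b / 2) - 1) :
    False :=
  (eight_mul_cube_sub_four_mul_add_one_pos (by linarith)).ne'
    (eight_mul_cube_sub_four_mul_add_one_eq_zero (by linarith) h1 h2)

theorem multipliers_distinct (a b : ℝ) (ha : 1 ≤ a) (hb : 1 ≤ b)
    (h1 : 2 * a ^ 2 + a ^ 2 / (2 * a - 1) ^ 2 - 2 * a ^ 3 / (2 * a - 1)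
        = 1 / 2 + b ^ 2 - b / 2)
    (h2 : ((8 * a ^ 2 - 2 * a + 1) / (2 * a - 1)) ^ 2 - 2
        = 16 * (b ^ 2 - b / 2) - 1) :
    False :=
  multipliers_distinct_general a b ha h1 h2
end

section
/- Let F_k be the Fibonacci numbers with F_0 = F_1 = 1, and let C_k satisfy C_k = C_{k−1} + C_{k−2} + 2 F_{k−2} (with arbitrary fixed initial values C_1, C_2). Then lim_{k→∞} C_k/(k·F_k) = 4/(5+√5) = 2/(φ+2), where φ = (1+√5)/2. -/
/-!
With `F k = fib (k + 1)`, the sequence `(2/5) k L_k` (`L` the Lucas numbers) is a particular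
solution of the recurrence for `C`, because `L_{k+2} + L_k = 5 F_k`. The difference of `C` and
this particular solution satisfies the Fibonacci recurrence, so it is `O(F_k) = o(k F_k)`, and
`(2/5) k L_k / (k F_k) → (2/5)(2 + ψ) = 4 / (5 + √5)` because `F_{k-1} / F_k → -ψ`.
-/

open Filter Real Nat Asymptotics Topology
open scoped goldenRatio

theorem eq_fib_comb_of_fib_rec {R : Type*} [CommRing R] {G : ℕ → R}
    (hG : ∀ n, G (n + 2) = G (n + 1) + G n) (n : ℕ) :
    G n = G 0 * fib (n + 1) + (G 1 - G 0) * fib n := by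
  induction n using Nat.twoStepInduction with
  | zero => simp
  | one => simp
  | more n ih₀ ih₁ =>
    rw [hG, ih₀, ih₁, fib_add_two (n := n + 1), fib_add_two]
    push_cast
    ring

theorem fib_isBigO_fib_succ : (fun n => (fib n : ℝ)) =O[atTop] fun n => (fib (n + 1) : ℝ) :=
  IsBigO.of_bound' <| Eventually.of_forall fun n => by simpa using fib_le_fib_succ

theorem isBigO_fib_succ_of_fib_rec {G : ℕ → ℝ} (hG : ∀ n, G (n + 2) = G (n + 1) + G n) :
    G =O[atTop] fun n => (fib (n + 1) : ℝ) :=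
  (((isBigO_refl _ _).const_mul_left _).add (fib_isBigO_fib_succ.const_mul_left _)).congr_left
    fun n => (eq_fib_comb_of_fib_rec hG n).symm

theorem tendsto_div_succ_mul_fib_of_fib_rec {G : ℕ → ℝ}
    (hG : ∀ n, G (n + 2) = G (n + 1) + G n) :
    Tendsto (fun n => G n / ((n + 1 : ℕ) * fib (n + 2))) atTop (𝓝 0) := by
  have hsmall : (fun n => (fib (n + 2) : ℝ)) =o[atTop]
      fun n => ((n + 1 : ℕ) : ℝ) * fib (n + 2) := by
    have h1 : (fun _ => (1 : ℝ)) =o[atTop] fun n => ((n + 1 : ℕ) : ℝ) :=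
      (isLittleO_one_left_iff ℝ).2 <| tendsto_norm_atTop_atTop.comp <|
        tendsto_natCast_atTop_atTop.comp (tendsto_add_atTop_nat 1)
    simpa using h1.mul_isBigO (isBigO_refl (fun n => (fib (n + 2) : ℝ)) atTop)
  exact ((isBigO_fib_succ_of_fib_rec hG).trans
    (fib_isBigO_fib_succ.comp_tendsto (tendsto_add_atTop_nat 1))).trans_isLittleO hsmall
    |>.tendsto_div_nhds_zero

/-- The Lucas numbers `fib (n - 1) + fib (n + 1)`, written without truncated subtraction. -/
def lucas (n : ℕ) : ℝ := 2 * fib (n + 1) - fib n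

theorem lucas_add_two (n : ℕ) : lucas (n + 2) = lucas (n + 1) + lucas n := by
  simp only [lucas, fib_add_two, cast_add]
  ring

theorem lucas_add_two_add_lucas (n : ℕ) : lucas (n + 2) + lucas n = 5 * fib (n + 1) := by
  simp only [lucas, fib_add_two, cast_add]
  ring

theorem mul_lucas_add_two (n : ℕ) :
    (n + 2 : ℝ) * lucas (n + 2) = (n + 1) * lucas (n + 1) + n * lucas n + 5 * fib (n + 1) := by
  linear_combination (n + 1 : ℝ) * lucas_add_two n + lucas_add_two_add_lucas n

theorem tendsto_lucas_div_fib_succ :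
    Tendsto (fun n => lucas n / fib (n + 1)) atTop (𝓝 (2 + ψ)) := by
  have h n : lucas n / fib (n + 1) = 2 - fib n / fib (n + 1) := by
    have : (fib (n + 1) : ℝ) ≠ 0 := cast_ne_zero.2 (fib_pos.2 n.succ_pos).ne'
    rw [lucas]
    field_simp
  rw [← sub_neg_eq_add]
  exact (tendsto_fib_div_fib_succ_atTop.const_sub 2).congr fun n => (h n).symm

theorem two_fifths_mul_two_add_goldenConj : 2 / 5 * (2 + ψ) = 4 / (5 + √5) := by
  have h5 : √5 ^ 2 = 5 := sq_sqrt (by norm_num)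
  rw [goldenConj]
  field_simp
  linear_combination -h5

theorem Ck_limit (F C : ℕ → ℝ)
    (hF0 : F 0 = 1) (hF1 : F 1 = 1) (hFrec : ∀ k, F (k + 2) = F (k + 1) + F k)
    (hCrec : ∀ k, C (k + 3) = C (k + 2) + C (k + 1) + 2 * F (k + 1)) :
    Tendsto (fun k : ℕ => C k / (k * F k)) atTop (nhds (4 / (5 + Real.sqrt 5))) := by
  have hF k : F k = fib (k + 1) := by simpa [hF0, hF1] using eq_fib_comb_of_fib_rec hFrec k
  set H : ℕ → ℝ := fun n => C (n + 1) - 2 / 5 * (n + 1 : ℕ) * lucas (n + 1) with hH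
  have hHrec n : H (n + 2) = H (n + 1) + H n := by
    simp only [hH, hCrec, hF]
    linear_combination (norm := (push_cast; ring_nf)) (-2 / 5 : ℝ) * mul_lucas_add_two (n + 1)
  have hP := (tendsto_lucas_div_fib_succ.const_mul (2 / 5)).comp (tendsto_add_atTop_nat 1)
  rw [two_fifths_mul_two_add_goldenConj] at hP
  rw [← tendsto_add_atTop_iff_nat 1, ← add_zero (4 / _)]
  refine (hP.add (tendsto_div_succ_mul_fib_of_fib_rec hHrec)).congr fun n => ?_
  have : (fib (n + 2) : ℝ) ≠ 0 := cast_ne_zero.2 (fib_pos.2 n.succ.succ_pos).ne'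
  simp only [Function.comp, hH, hF]
  push_cast
  field_simp
  ring
end

section
/- Suppose R_k is a real sequence satisfying |R_k − R_{k−1} − R_{k−2}| ≤ β/F_{k−1} for all k ≥ 3 (with β > 0 a constant and F_k the Fibonacci numbers, F_0 = F_1 = 1). Then R_k = O(F_k); in particular lim_{k→∞} R_k/(k F_k) = 0. -/
/-!
Adding the error bound to the triangle inequality for `R (k + 2) = R (k + 1) + R k + error`
gives `|R k| ≤ A * F k` by induction, provided the induction carries the slightly stronger
bound `|R k| ≤ A * F k - β / F k`: the error `β / F (k + 1)` of one step is absorbed by the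
slack `β / F (k + 1)` of the previous bound, and the slack `β / F k ≥ β / F (k + 2)` survives.
Dividing by `k * F k` then gives a sequence bounded by `A / k`.
-/

open Filter Topology

section FibLike

variable {F R : ℕ → ℝ}

theorem fibLike_pos (h0 : 0 < F 0) (h1 : 0 < F 1) (hrec : ∀ k, F (k + 2) = F (k + 1) + F k) :
    ∀ k, 0 < F k
  | 0 => h0
  | 1 => h1
  | k + 2 => by rw [hrec]; exact add_pos (fibLike_pos h0 h1 hrec (k + 1)) (fibLike_pos h0 h1 hrec k)

theorem abs_le_mul_sub_div_of_fibLike {A β : ℝ} (hβ : 0 ≤ β) (hF : ∀ k, 0 < F k)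
    (hrec : ∀ k, F (k + 2) = F (k + 1) + F k)
    (hR : ∀ k, |R (k + 2) - R (k + 1) - R k| ≤ β / F (k + 1))
    (h0 : |R 0| ≤ A * F 0 - β / F 0) (h1 : |R 1| ≤ A * F 1 - β / F 1) :
    ∀ k, |R k| ≤ A * F k - β / F k
  | 0 => h0
  | 1 => h1
  | k + 2 => by
    have ih₀ := abs_le_mul_sub_div_of_fibLike hβ hF hrec hR h0 h1 k
    have ih₁ := abs_le_mul_sub_div_of_fibLike hβ hF hrec hR h0 h1 (k + 1)
    have hslack : β / F (k + 2) ≤ β / F k :=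
      div_le_div_of_nonneg_left hβ (hF k) (by linarith [hrec k, hF (k + 1)])
    have htri : |R (k + 2)| ≤ |R (k + 2) - R (k + 1) - R k| + |R (k + 1)| + |R k| := by
      calc |R (k + 2)| = |(R (k + 2) - R (k + 1) - R k) + R (k + 1) + R k| := by ring_nf
        _ ≤ _ := abs_add_three _ _ _
    linarith [hR k, congrArg (A * ·) (hrec k)]

theorem tendsto_div_natCast_mul_of_abs_le_mul {c : ℝ} (hF : ∀ k, 0 < F k)
    (hR : ∀ k, |R k| ≤ c * F k) :
    Tendsto (fun k : ℕ => R k / (k * F k)) atTop (𝓝 0) := by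
  refine squeeze_zero_norm (fun k => ?_) (tendsto_const_div_atTop_nhds_zero_nat c)
  have hkF : 0 ≤ (k : ℝ) * F k := mul_nonneg k.cast_nonneg (hF k).le
  calc ‖R k / (k * F k)‖ = |R k| / (k * F k) := by
        rw [Real.norm_eq_abs, abs_div, abs_of_nonneg hkF]
    _ ≤ c * F k / (k * F k) := div_le_div_of_nonneg_right (hR k) hkF
    _ = c / k := mul_div_mul_right _ _ (hF k).ne'

end FibLike

theorem Rk_bound (F R : ℕ → ℝ) (β : ℝ) (hβ : 0 < β)
    (hF0 : F 0 = 1) (hF1 : F 1 = 1) (hFrec : ∀ k, F (k + 2) = F (k + 1) + F k)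
    (hR : ∀ k, |R (k + 3) - R (k + 2) - R (k + 1)| ≤ β / F (k + 2)) :
    (∃ c : ℝ, ∀ k, |R k| ≤ c * F k) ∧
      Tendsto (fun k : ℕ => R k / (k * F k)) atTop (nhds 0) := by
  have hF : ∀ k, 0 < F k := fibLike_pos (by rw [hF0]; norm_num) (by rw [hF1]; norm_num) hFrec
  have hF2 : F 2 = 2 := by rw [hFrec 0, hF0, hF1]; norm_num
  set A := |R 0| + |R 1| + |R 2| + β
  have hRA : |R 0| ≤ A * F 0 ∧ |R 1| ≤ A * F 1 - β / F 1 ∧ |R 2| ≤ A * F 2 - β / F 2 := by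
    rw [hF0, hF1, hF2]
    refine ⟨?_, ?_, ?_⟩ <;> linarith [abs_nonneg (R 0), abs_nonneg (R 1), abs_nonneg (R 2)]
  -- the recursion starts at `R 3`, so run the induction on the shifted sequences
  have hshift : ∀ k, |R (k + 1)| ≤ A * F (k + 1) - β / F (k + 1) :=
    abs_le_mul_sub_div_of_fibLike (F := fun k => F (k + 1)) (R := fun k => R (k + 1)) hβ.le
      (fun k => hF _) (fun k => hFrec _) hR hRA.2.1 hRA.2.2
  have hbound : ∀ k, |R k| ≤ A * F k
    | 0 => hRA.1
    | k + 1 => by linarith [hshift k, div_nonneg hβ.le (hF (k + 1)).le]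
  exact ⟨⟨A, hbound⟩, tendsto_div_natCast_mul_of_abs_le_mul hF hbound⟩
end

section
/- Let A be a transitive (primitive) nonnegative integer N×N matrix with Perron eigenvalue λ > 1 and right and left positive Perron eigenvectors v, u normalized so that Σᵢ uᵢvᵢ = 1. Then for each pair (i,j), (A^k)_{ij}·λ^{−k} → u_j·v_i as k → ∞ (equivalently, λ^{−k}A^k converges to the rank-one matrix v uᵀ). -/
/-!
Put `B = λ⁻¹A`, so that `Bv = v` and `uᵀB = uᵀ`. Conjugating by `diag v` turns `B` into the
row-stochastic matrix `S = diag(v)⁻¹ B diag(v)`, which has a positive power. For such `S`, Doeblin's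
argument shows that the spread `max - min` of `S^k x` shrinks geometrically while the maximum
decreases and the minimum increases, so every column of `S^k` tends to a constant vector. Undoing
the conjugation, column `j` of `B^k` tends to a multiple `L v` of `v`, and `uᵀB^k = uᵀ` together
with `uᵀv = 1` forces `L = u_j`.
-/

open Filter Topology Finset

theorem tendsto_zero_of_antitone_of_le_mul {g : ℕ → ℝ} (hg : Antitone g) (hg0 : ∀ k, 0 ≤ g k)
    {r : ℝ} (hr0 : 0 ≤ r) (hr1 : r < 1) {n : ℕ} (hn : 0 < n)
    (hstep : ∀ k, g (n + k) ≤ r * g k) : Tendsto g atTop (𝓝 0) := by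
  have hmul : ∀ t, g (n * t) ≤ r ^ t * g 0 := by
    intro t
    induction t with
    | zero => simp
    | succ t ih =>
      calc g (n * (t + 1)) = g (n + n * t) := by ring_nf
        _ ≤ r * g (n * t) := hstep _
        _ ≤ r * (r ^ t * g 0) := by gcongr
        _ = r ^ (t + 1) * g 0 := by ring
  have hdiv : Tendsto (fun k => k / n) atTop atTop :=
    Nat.tendsto_div_const_atTop hn.ne'
  have hbound : Tendsto (fun k => r ^ (k / n) * g 0) atTop (𝓝 0) := by
    simpa using ((tendsto_pow_atTop_nhds_zero_of_lt_one hr0 hr1).comp hdiv).mul_const (g 0)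
  exact squeeze_zero hg0 (fun k => (hg (Nat.mul_div_le k n)).trans (hmul _)) hbound

theorem exists_tendsto_of_antitone_of_monotone {M m : ℕ → ℝ} (hM : Antitone M) (hm : Monotone m)
    (hle : ∀ k, m k ≤ M k) (hgap : Tendsto (M - m) atTop (𝓝 0)) :
    ∃ c, Tendsto M atTop (𝓝 c) ∧ Tendsto m atTop (𝓝 c) := by
  have hMc : Tendsto M atTop (𝓝 (⨅ k, M k)) :=
    tendsto_atTop_ciInf hM ⟨m 0, by rintro _ ⟨k, rfl⟩; exact (hm k.zero_le).trans (hle k)⟩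
  refine ⟨_, hMc, ?_⟩
  simpa using hMc.sub hgap

namespace Matrix

variable {ι : Type*} [Fintype ι] [DecidableEq ι] {S : Matrix ι ι ℝ}

theorem mulVec_apply_le_of_mem_rowStochastic (hS : S ∈ rowStochastic ℝ ι) {x : ι → ℝ} {c : ℝ}
    (hx : ∀ j, x j ≤ c) (i : ι) : (S *ᵥ x) i ≤ c :=
  calc (S *ᵥ x) i = ∑ j, S i j * x j := rfl
    _ ≤ ∑ j, S i j * c := by
      gcongr with j; exacts [nonneg_of_mem_rowStochastic hS, hx j]
    _ = c := by rw [← sum_mul, sum_row_of_mem_rowStochastic hS, one_mul]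

theorem le_mulVec_apply_of_mem_rowStochastic (hS : S ∈ rowStochastic ℝ ι) {x : ι → ℝ} {c : ℝ}
    (hx : ∀ j, c ≤ x j) (i : ι) : c ≤ (S *ᵥ x) i := by
  have := mulVec_apply_le_of_mem_rowStochastic hS (x := -x) (c := -c)
    (fun j => neg_le_neg (hx j)) i
  rwa [mulVec_neg, Pi.neg_apply, neg_le_neg_iff] at this

section Doeblin

variable [Nonempty ι]

theorem iSup_mulVec_le_of_mem_rowStochastic (hS : S ∈ rowStochastic ℝ ι) (x : ι → ℝ) :
    ⨆ i, (S *ᵥ x) i ≤ ⨆ i, x i :=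
  ciSup_le <| mulVec_apply_le_of_mem_rowStochastic hS fun j => le_ciSup (Finite.bddAbove_range x) j

theorem iInf_le_mulVec_of_mem_rowStochastic (hS : S ∈ rowStochastic ℝ ι) (x : ι → ℝ) :
    ⨅ i, x i ≤ ⨅ i, (S *ᵥ x) i :=
  le_ciInf <| le_mulVec_apply_of_mem_rowStochastic hS fun j => ciInf_le (Finite.bddBelow_range x) j

theorem iSup_mulVec_le_of_forall_le_apply (hS : S ∈ rowStochastic ℝ ι) {θ : ℝ}
    (hθ : ∀ i j, θ ≤ S i j) (x : ι → ℝ) :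
    ⨆ i, (S *ᵥ x) i ≤ (⨆ i, x i) - θ * ((⨆ i, x i) - ⨅ i, x i) := by
  set M := ⨆ i, x i
  obtain ⟨j₀, hj₀⟩ := exists_eq_ciInf_of_finite (f := x)
  have hxM : ∀ j, x j ≤ M := fun j => le_ciSup (Finite.bddAbove_range x) j
  refine ciSup_le fun i => ?_
  have hdrop : S i j₀ * (M - x j₀) ≤ ∑ j, S i j * (M - x j) :=
    single_le_sum (f := fun j => S i j * (M - x j))
      (fun j _ => mul_nonneg (nonneg_of_mem_rowStochastic hS) (sub_nonneg.2 (hxM j))) (mem_univ j₀)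
  have hsplit : (S *ᵥ x) i = M - ∑ j, S i j * (M - x j) := by
    simp only [mul_sub, sum_sub_distrib, ← sum_mul, sum_row_of_mem_rowStochastic hS, one_mul,
      sub_sub_cancel]
    rfl
  rw [hsplit, ← hj₀]
  nlinarith [hθ i j₀, hxM j₀]

theorem exists_tendsto_pow_mulVec_of_mem_rowStochastic (hS : S ∈ rowStochastic ℝ ι) {n : ℕ}
    (hpos : ∀ i j, 0 < (S ^ n) i j) (x : ι → ℝ) :
    ∃ c, ∀ i, Tendsto (fun k => (S ^ k *ᵥ x) i) atTop (𝓝 c) := by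
  obtain ⟨θ, hθ, hθn⟩ : ∃ θ > 0, ∀ i j, θ ≤ (S ^ n) i j := by
    obtain ⟨p, hp⟩ := exists_eq_ciInf_of_finite (f := fun p : ι × ι => (S ^ n) p.1 p.2)
    exact ⟨_, hp ▸ hpos p.1 p.2, fun i j => ciInf_le (Finite.bddBelow_range _) (i, j)⟩
  have hSk : ∀ k, S ^ k ∈ rowStochastic ℝ ι := fun k => pow_mem hS k
  -- pass to the exponent `n + 1`, which is positive, as the gap estimate below needs
  have hθn' : ∀ i j, θ ≤ (S ^ (n + 1)) i j := fun i j => by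
    have := le_mulVec_apply_of_mem_rowStochastic hS (x := (S ^ n).col j) (fun l => hθn l j) i
    rwa [← mulVec_single_one, mulVec_mulVec, mulVec_single_one, col_apply, ← pow_succ'] at this
  set M : ℕ → ℝ := fun k => ⨆ i, (S ^ k *ᵥ x) i
  set m : ℕ → ℝ := fun k => ⨅ i, (S ^ k *ᵥ x) i
  have hpow_add : ∀ l k, S ^ (l + k) *ᵥ x = S ^ l *ᵥ (S ^ k *ᵥ x) := fun l k => by
    rw [pow_add, mulVec_mulVec]
  have hM : Antitone M := antitone_nat_of_succ_le fun k => by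
    simpa only [M, add_comm k, hpow_add, pow_one] using iSup_mulVec_le_of_mem_rowStochastic hS _
  have hm : Monotone m := monotone_nat_of_le_succ fun k => by
    simpa only [m, add_comm k, hpow_add, pow_one] using iInf_le_mulVec_of_mem_rowStochastic hS _
  have hmM : ∀ k, m k ≤ M k := fun k =>
    (ciInf_le (Finite.bddBelow_range _) (Classical.arbitrary ι)).trans
      (le_ciSup (Finite.bddAbove_range _) _)
  have hgap : Tendsto (M - m) atTop (𝓝 0) := by
    refine tendsto_zero_of_antitone_of_le_mul (fun a b hab => sub_le_sub (hM hab) (hm hab))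
      (fun k => sub_nonneg.2 (hmM k)) (sub_nonneg.2 ?_) (sub_lt_self 1 hθ) n.succ_pos
      (fun k => ?_)
    · exact (hθn' (Classical.arbitrary ι) (Classical.arbitrary ι)).trans
        (le_one_of_mem_rowStochastic (hSk _))
    · have hcontr := iSup_mulVec_le_of_forall_le_apply (hSk (n + 1)) hθn' (S ^ k *ᵥ x)
      rw [← hpow_add] at hcontr
      have := hm (Nat.le_add_left k (n + 1))
      simp only [Pi.sub_apply, M, m] at hcontr this ⊢
      nlinarith
  obtain ⟨c, hMc, hmc⟩ := exists_tendsto_of_antitone_of_monotone hM hm hmM hgap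
  exact ⟨c, fun i => tendsto_of_tendsto_of_tendsto_of_le_of_le hmc hMc
    (fun k => ciInf_le (Finite.bddBelow_range _) i) (fun k => le_ciSup (Finite.bddAbove_range _) i)⟩

end Doeblin

section PositiveFixedVector

variable {B : Matrix ι ι ℝ} {v : ι → ℝ}

theorem diagonal_inv_mul_mul_diagonal_mem_rowStochastic (hB : ∀ i j, 0 ≤ B i j)
    (hv : ∀ i, 0 < v i) (hBv : B *ᵥ v = v) : diagonal v⁻¹ * B * diagonal v ∈ rowStochastic ℝ ι := by
  rw [mem_rowStochastic_iff_sum]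
  refine ⟨fun i j => ?_, fun i => ?_⟩
  · rw [mul_diagonal, diagonal_mul, Pi.inv_apply]
    have := hv i; have := hv j; have := hB i j
    positivity
  · have hrow : ∑ j, B i j * v j = v i := congrFun hBv i
    simp only [mul_diagonal, diagonal_mul, Pi.inv_apply, mul_assoc, ← mul_sum, hrow]
    exact inv_mul_cancel₀ (hv i).ne'

theorem diagonal_inv_mul_mul_diagonal_pow (hv : ∀ i, v i ≠ 0) (k : ℕ) :
    (diagonal v⁻¹ * B * diagonal v) ^ k = diagonal v⁻¹ * B ^ k * diagonal v := by
  have hvv : ∀ i, v i * (v i)⁻¹ = 1 := fun i => mul_inv_cancel₀ (hv i)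
  exact Units.conj_pow ⟨diagonal v⁻¹, diagonal v, by simp [diagonal_mul_diagonal, mul_comm, hvv],
    by simp [diagonal_mul_diagonal, hvv]⟩ B k

theorem tendsto_pow_apply_of_mulVec_eq_self_of_vecMul_eq_self (hB : ∀ i j, 0 ≤ B i j)
    (hv : ∀ i, 0 < v i) (hBv : B *ᵥ v = v) {u : ι → ℝ} (huB : u ᵥ* B = u) (huv : u ⬝ᵥ v = 1)
    {n : ℕ} (hpos : ∀ i j, 0 < (B ^ n) i j) (i j : ι) :
    Tendsto (fun k => (B ^ k) i j) atTop (𝓝 (v i * u j)) := by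
  have : Nonempty ι := ⟨i⟩
  set S := diagonal v⁻¹ * B * diagonal v
  have hS_pow : ∀ k a b, (S ^ k) a b = (v a)⁻¹ * (B ^ k) a b * v b := fun k a b => by
    rw [diagonal_inv_mul_mul_diagonal_pow (fun a => (hv a).ne'), mul_diagonal, diagonal_mul,
      Pi.inv_apply]
  have hS : S ∈ rowStochastic ℝ ι := diagonal_inv_mul_mul_diagonal_mem_rowStochastic hB hv hBv
  obtain ⟨c, hc⟩ := exists_tendsto_pow_mulVec_of_mem_rowStochastic hS (n := n)
    (fun a b => by have := hv a; have := hv b; have := hpos a b; rw [hS_pow]; positivity)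
    (Pi.single j 1)
  set L := c * (v j)⁻¹
  have hlim : ∀ a, Tendsto (fun k => (B ^ k) a j) atTop (𝓝 (v a * L)) := fun a => by
    have h := ((hc a).const_mul (v a)).mul_const (v j)⁻¹
    simp only [mulVec_single_one, col_apply, hS_pow] at h
    convert h using 2 with k
    · have := (hv a).ne'; have := (hv j).ne'
      field_simp
    · ring
  have hu_pow : ∀ k, u ᵥ* B ^ k = u := fun k => by
    induction k with
    | zero => simp
    | succ k ih => rw [pow_succ, ← vecMul_vecMul, ih, huB]
  have hL : L = u j := by
    have hsum : Tendsto (fun k => ∑ a, u a * (B ^ k) a j) atTop (𝓝 (∑ a, u a * (v a * L))) :=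
      tendsto_finsetSum _ fun a _ => (hlim a).const_mul (u a)
    have hconst : ∀ k, ∑ a, u a * (B ^ k) a j = u j := fun k => congrFun (hu_pow k) j
    simp only [hconst] at hsum
    calc L = (u ⬝ᵥ v) * L := by rw [huv, one_mul]
      _ = ∑ a, u a * (v a * L) := by simp only [dotProduct, sum_mul, mul_assoc]
      _ = u j := tendsto_nhds_unique hsum tendsto_const_nhds
  rw [← hL]
  exact hlim i

end PositiveFixedVector

end Matrix

theorem perron_frobenius_convergence_general (N : ℕ) (A : Matrix (Fin N) (Fin N) ℝ)
    (hint : ∀ i j, ∃ m : ℕ, A i j = (m : ℝ))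
    (hprim : ∃ n : ℕ, ∀ i j, 0 < (A ^ n) i j)
    (lam : ℝ) (hlam : 1 < lam)
    (v u : Fin N → ℝ) (hv : ∀ i, 0 < v i)
    (hAv : A.mulVec v = lam • v) (huA : A.vecMul u = lam • u)
    (hnorm : ∑ i, u i * v i = 1) :
    ∀ i j, Tendsto (fun k : ℕ => (A ^ k) i j / lam ^ k) atTop (nhds (u j * v i)) := by
  intro i j
  obtain ⟨n, hn⟩ := hprim
  have hlam0 : 0 < lam := zero_lt_one.trans hlam
  have hA : ∀ a b, 0 ≤ A a b := fun a b => by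
    obtain ⟨m, hm⟩ := hint a b
    exact hm ▸ m.cast_nonneg
  have hB_pow : ∀ k a b, ((lam⁻¹ • A) ^ k) a b = (A ^ k) a b / lam ^ k := fun k a b => by
    rw [smul_pow, Matrix.smul_apply, smul_eq_mul, inv_pow, inv_mul_eq_div]
  have hlim := Matrix.tendsto_pow_apply_of_mulVec_eq_self_of_vecMul_eq_self (B := lam⁻¹ • A)
    (fun a b => smul_nonneg (inv_nonneg.2 hlam0.le) (hA a b)) hv
    (by rw [Matrix.smul_mulVec, hAv, smul_smul, inv_mul_cancel₀ hlam0.ne', one_smul])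
    (by rw [Matrix.vecMul_smul, huA, smul_smul, inv_mul_cancel₀ hlam0.ne', one_smul]) hnorm
    (fun a b => by rw [hB_pow]; exact div_pos (hn a b) (pow_pos hlam0 n)) i j
  simpa only [hB_pow, mul_comm (v i)] using hlim

theorem perron_frobenius_convergence (N : ℕ) (A : Matrix (Fin N) (Fin N) ℝ)
    (hint : ∀ i j, ∃ m : ℕ, A i j = (m : ℝ))
    (hprim : ∃ n : ℕ, ∀ i j, 0 < (A ^ n) i j)
    (lam : ℝ) (hlam : 1 < lam)
    (v u : Fin N → ℝ) (hv : ∀ i, 0 < v i) (hu : ∀ i, 0 < u i)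
    (hAv : A.mulVec v = lam • v) (huA : A.vecMul u = lam • u)
    (hnorm : ∑ i, u i * v i = 1) :
    ∀ i j, Tendsto (fun k : ℕ => (A ^ k) i j / lam ^ k) atTop (nhds (u j * v i)) :=
  perron_frobenius_convergence_general N A hint hprim lam hlam v u hv hAv huA hnorm
end
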